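/- In the example setting, the function Φ_e(λ) := b + cλ + ∫₋₁^ℓ (x e^{λx} − h(x)) f(x) dx is differentiable on ℝ with Φ_e′(λ) = c + ∫₋₁^ℓ x² e^{λx} f(x) dx ≥ δ for every λ ∈ ℝ, and consequently Φ_e has a unique zero λ_e ∈ ℝ; moreover |λ_e| ≤ |b₀|/δ and λ_e has the opposite sign to b₀ (with λ_e = 0 if b₀ = 0). -/

import Mathlib

open MeasureTheory
open scoped Real

noncomputable section

/-- The truncation function `h(x) = x · 1_{|x| ≤ 1}` on `ℝ`. -/
def trunc (x : ℝ) : ℝ := if |x| ≤ 1 then x else 0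

/-- `Φ(λ, q) = b + cλ + ∫₋₁^ℓ (x ((q-1)λx + 1)^{1/(q-1)} - h(x)) f(x) dx`. -/
def Phi (b c ℓ : ℝ) (f : ℝ → ℝ) (lam q : ℝ) : ℝ :=
  b + c * lam +
    ∫ x in Set.Ioo (-1 : ℝ) ℓ, (x * ((q - 1) * lam * x + 1) ^ (1 / (q - 1)) - trunc x) * f x

/-- `Φ_e(λ) = b + cλ + ∫₋₁^ℓ (x e^{λx} - h(x)) f(x) dx`. -/
def PhiE (b c ℓ : ℝ) (f : ℝ → ℝ) (lam : ℝ) : ℝ :=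
  b + c * lam + ∫ x in Set.Ioo (-1 : ℝ) ℓ, (x * Real.exp (lam * x) - trunc x) * f x

/-- `γ₁(q) = -1/((q-1) max(1,ℓ))`. -/
def gam1 (ℓ q : ℝ) : ℝ := -(1 / ((q - 1) * max 1 ℓ))

/-- `γ₂(q) = 1/(q-1)`. -/
def gam2 (q : ℝ) : ℝ := 1 / (q - 1)

/-- `δ₁ = c + ∫₋₁⁰ x² f(x) dx`. -/
def del1 (c : ℝ) (f : ℝ → ℝ) : ℝ := c + ∫ x in Set.Ioo (-1 : ℝ) 0, x ^ 2 * f x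

/-- `δ₂ = c + ∫₀^ℓ x² f(x) dx`. -/
def del2 (c ℓ : ℝ) (f : ℝ → ℝ) : ℝ := c + ∫ x in Set.Ioo (0 : ℝ) ℓ, x ^ 2 * f x

/-- `δ = min(δ₁, δ₂)`. -/
def del (c ℓ : ℝ) (f : ℝ → ℝ) : ℝ := min (del1 c f) (del2 c ℓ f)

/-- `b₀ = b + ∫₋₁^ℓ (x - h(x)) f(x) dx`. -/
def bZero (b ℓ : ℝ) (f : ℝ → ℝ) : ℝ :=
  b + ∫ x in Set.Ioo (-1 : ℝ) ℓ, (x - trunc x) * f x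

/-- The hypotheses of the example setting: `d = 1`, `c ≥ 0`, `0 < ℓ < ∞`,
`f` a bounded measurable density vanishing outside `(-1, ℓ)`, and, if `c = 0`,
jumps of both positive and negative heights. -/
structure ExampleSetting (c ℓ : ℝ) (f : ℝ → ℝ) : Prop where
  hc : 0 ≤ c
  hl : 0 < ℓ
  hfmeas : Measurable f
  hfnonneg : ∀ x, 0 ≤ f x
  hfbdd : ∃ M : ℝ, ∀ x, f x ≤ M
  hsupp : ∀ x, x ∉ Set.Ioo (-1 : ℝ) ℓ → f x = 0
  hjumps : c = 0 →
    (0 < ∫ x in Set.Ioo (-1 : ℝ) 0, f x) ∧ (0 < ∫ x in Set.Ioo (0 : ℝ) ℓ, f x)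

/-!
Differentiation under the integral sign is legitimate because the density lives on a bounded
interval. Splitting the integral at `0`, on the half where `λx ≥ 0` one has `e^{λx} ≥ 1`, so
`Φ_e' ≥ δ₂` for `λ ≥ 0` and `Φ_e' ≥ δ₁` for `λ ≤ 0`. Hence `Φ_e` is strictly increasing and
`Φ_e - δ·id` is monotone; with `r = |Φ_e(0)|/δ` this gives `Φ_e(-r) ≤ 0 ≤ Φ_e(r)`, and the
intermediate value theorem produces the zero in `[-r, r]`. Finally `Φ_e(0) = b₀`, so the sign of
the zero is opposite to that of `b₀`.
-/

open Set Filter Real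

theorem exists_eq_zero_abs_le_of_le_deriv {F F' : ℝ → ℝ} {δ : ℝ}
    (hF : ∀ x, HasDerivAt F (F' x) x) (hδ : 0 < δ) (hF' : ∀ x, δ ≤ F' x) :
    ∃ z, F z = 0 ∧ |z| ≤ |F 0| / δ := by
  have hmono : Monotone fun x => F x - δ * x :=
    monotone_of_hasDerivAt_nonneg (fun x => (hF x).sub ((hasDerivAt_id x).const_mul δ))
      fun x => by simpa using hF' x
  set r := |F 0| / δ
  have hr : 0 ≤ r := by positivity
  have hδr : δ * r = |F 0| := mul_div_cancel₀ _ hδ.ne'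
  have hFr : 0 ≤ F r := by
    have := hmono hr
    simp only [mul_zero, sub_zero] at this
    linarith [neg_abs_le (F 0)]
  have hFnr : F (-r) ≤ 0 := by
    have := hmono (neg_nonpos.2 hr)
    simp only [mul_zero, sub_zero, mul_neg] at this
    linarith [le_abs_self (F 0)]
  obtain ⟨z, hz, hFz⟩ := intermediate_value_Icc (neg_le_self hr)
    (fun x _ => (hF x).continuousAt.continuousWithinAt) ⟨hFnr, hFr⟩
  exact ⟨z, hFz, abs_le.2 hz⟩

section BoundedSupport

variable {μ : Measure ℝ} {g : ℝ → ℝ} {R : ℝ}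

theorem MeasureTheory.Integrable.continuous_mul_of_ae_abs_le {φ : ℝ → ℝ} (hφ : Continuous φ)
    (hg : Integrable g μ) (hR : ∀ᵐ x ∂μ, |x| ≤ R) : Integrable (fun x => φ x * g x) μ := by
  obtain ⟨C, hC⟩ := isCompact_Icc.exists_bound_of_continuousOn (hφ.continuousOn (s := Icc (-R) R))
  exact hg.bdd_mul hφ.aestronglyMeasurable (hR.mono fun x hx => hC x (abs_le.1 hx))

theorem hasDerivAt_integral_mul_exp_mul (hg : Integrable g μ) (hR : ∀ᵐ x ∂μ, |x| ≤ R)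
    (t₀ : ℝ) :
    HasDerivAt (fun t => ∫ x, x * exp (t * x) * g x ∂μ)
      (∫ x, x ^ 2 * exp (t₀ * x) * g x ∂μ) t₀ := by
  have hbound : ∀ᵐ x ∂μ, ∀ t ∈ Metric.ball t₀ 1,
      ‖x ^ 2 * exp (t * x) * g x‖ ≤ R ^ 2 * exp ((|t₀| + 1) * R) * ‖g x‖ := by
    filter_upwards [hR] with x hx t hdist
    have hR₀ : 0 ≤ R := (abs_nonneg x).trans hx
    have ht : |t| ≤ |t₀| + 1 := by
      have := abs_sub_abs_le_abs_sub t t₀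
      rw [Metric.mem_ball, Real.dist_eq] at hdist
      linarith
    have hexp : exp (t * x) ≤ exp ((|t₀| + 1) * R) :=
      exp_le_exp.2 <| (le_abs_self _).trans <| (abs_mul t x).trans_le (by gcongr)
    have hsq : x ^ 2 ≤ R ^ 2 := by rw [← sq_abs]; gcongr
    rw [norm_mul, norm_mul, Real.norm_of_nonneg (by positivity),
      Real.norm_of_nonneg (exp_pos _).le]
    gcongr
  refine (hasDerivAt_integral_of_dominated_loc_of_deriv_le (F := fun t x => x * exp (t * x) * g x)
    (Metric.ball_mem_nhds t₀ one_pos)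
    (Eventually.of_forall fun t => (by fun_prop : Continuous fun x => x * exp (t * x))
      |>.aestronglyMeasurable.mul hg.1)
    (hg.continuous_mul_of_ae_abs_le (φ := fun x => x * exp (t₀ * x)) (by fun_prop) hR)
    ((by fun_prop : Continuous fun x => x ^ 2 * exp (t₀ * x)).aestronglyMeasurable.mul hg.1)
    hbound (hg.norm.const_mul _) (ae_of_all _ fun x t _ => ?_)).2
  exact (((hasDerivAt_mul_const (x := t) x).exp.const_mul x).mul_const (g x)).congr_deriv
    (by ring)

theorem integral_sq_mul_pos [NullSingletonClass μ] (hg₀ : 0 ≤ g) (hg : Integrable g μ)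
    (hR : ∀ᵐ x ∂μ, |x| ≤ R) (hpos : 0 < ∫ x, g x ∂μ) : 0 < ∫ x, x ^ 2 * g x ∂μ := by
  rw [integral_pos_iff_support_of_nonneg hg₀ hg] at hpos
  rw [integral_pos_iff_support_of_nonneg (fun x => mul_nonneg (sq_nonneg x) (hg₀ x))
    (hg.continuous_mul_of_ae_abs_le (by fun_prop) hR), Function.support_mul]
  have hsupp : Function.support (fun x : ℝ => x ^ 2) ∩ Function.support g
      = Function.support g \ {0} := by
    ext x; simp [and_comm]
  rwa [hsupp, measure_sdiff_null (measure_singleton 0)]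

theorem integral_sq_mul_le_integral_sq_mul_exp {t : ℝ} (hg₀ : 0 ≤ g) (hg : Integrable g μ)
    (hR : ∀ᵐ x ∂μ, |x| ≤ R) (ht : ∀ᵐ x ∂μ, 0 ≤ t * x) :
    ∫ x, x ^ 2 * g x ∂μ ≤ ∫ x, x ^ 2 * exp (t * x) * g x ∂μ :=
  integral_mono_ae (hg.continuous_mul_of_ae_abs_le (by fun_prop) hR)
    (hg.continuous_mul_of_ae_abs_le (φ := fun x => x ^ 2 * exp (t * x)) (by fun_prop) hR)
    (ht.mono fun x hx => mul_le_mul_of_nonneg_right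
      (le_mul_of_one_le_right (sq_nonneg x) (one_le_exp hx)) (hg₀ x))

end BoundedSupport

theorem ae_restrict_Ioo_abs_le (a b : ℝ) : ∀ᵐ x ∂volume.restrict (Ioo a b), |x| ≤ max |a| |b| :=
  ae_restrict_of_forall_mem measurableSet_Ioo fun _ hx => abs_le_max_abs_abs hx.1.le hx.2.le

theorem setIntegral_Ioo_add_setIntegral_Ioo {a b c : ℝ} {g : ℝ → ℝ} (hab : a ≤ b) (hbc : b ≤ c)
    (hg : IntegrableOn g (Ioo a c)) :
    (∫ x in Ioo a b, g x) + ∫ x in Ioo b c, g x = ∫ x in Ioo a c, g x := by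
  have hint {u v : ℝ} (huv : u ≤ v) (hsub : Ioo u v ⊆ Ioo a c) : IntervalIntegrable g volume u v :=
    (intervalIntegrable_iff_integrableOn_Ioo_of_le huv).2 (hg.mono_set hsub)
  simp only [← integral_Ioc_eq_integral_Ioo, ← intervalIntegral.integral_of_le hab,
    ← intervalIntegral.integral_of_le hbc, ← intervalIntegral.integral_of_le (hab.trans hbc)]
  exact intervalIntegral.integral_add_adjacent_intervals
    (hint hab (Ioo_subset_Ioo_right hbc)) (hint hbc (Ioo_subset_Ioo_left hab))

theorem measurable_trunc : Measurable trunc :=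
  Measurable.ite (measurableSet_le measurable_norm measurable_const) measurable_id measurable_const

theorem abs_trunc_le_one (x : ℝ) : |trunc x| ≤ 1 := by
  unfold trunc; split_ifs with h <;> simp [h]

@[simp]
theorem PhiE_zero (b c ℓ : ℝ) (f : ℝ → ℝ) : PhiE b c ℓ f 0 = bZero b ℓ f := by
  simp [PhiE, bZero]

namespace ExampleSetting

variable {c ℓ : ℝ} {f : ℝ → ℝ}

theorem integrableOn (hset : ExampleSetting c ℓ f) (a b : ℝ) : IntegrableOn f (Ioo a b) := by
  obtain ⟨M, hM⟩ := hset.hfbdd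
  refine Measure.integrableOn_of_bounded (M := M) (by simp) hset.hfmeas.aestronglyMeasurable
    (ae_of_all _ fun x => ?_)
  rw [Real.norm_of_nonneg (hset.hfnonneg x)]
  exact hM x

theorem hasDerivAt_PhiE (hset : ExampleSetting c ℓ f) (b lam : ℝ) :
    HasDerivAt (PhiE b c ℓ f)
      (c + ∫ x in Ioo (-1 : ℝ) ℓ, x ^ 2 * exp (lam * x) * f x) lam := by
  have hf := hset.integrableOn (-1) ℓ
  have hR := ae_restrict_Ioo_abs_le (-1) ℓ
  have htrunc : IntegrableOn (fun x => trunc x * f x) (Ioo (-1) ℓ) :=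
    hf.bdd_mul measurable_trunc.aestronglyMeasurable (ae_of_all _ abs_trunc_le_one)
  have hPhiE : PhiE b c ℓ f = fun t => (b - ∫ x in Ioo (-1 : ℝ) ℓ, trunc x * f x) + c * t
      + ∫ x in Ioo (-1 : ℝ) ℓ, x * exp (t * x) * f x := by
    ext t
    rw [PhiE, ← sub_add_cancel (∫ x in Ioo (-1 : ℝ) ℓ, x * exp (t * x) * f x)
      (∫ x in Ioo (-1 : ℝ) ℓ, trunc x * f x), ← integral_sub
        (hf.continuous_mul_of_ae_abs_le (φ := fun x => x * exp (t * x)) (by fun_prop) hR) htrunc]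
    simp only [sub_mul]
    ring
  rw [hPhiE]
  exact (((hasDerivAt_id lam).const_mul c).const_add _).add
    (hasDerivAt_integral_mul_exp_mul hf hR lam) |>.congr_deriv (by simp)

theorem del_le_add_integral_sq_mul_exp (hset : ExampleSetting c ℓ f) (lam : ℝ) :
    del c ℓ f ≤ c + ∫ x in Ioo (-1 : ℝ) ℓ, x ^ 2 * exp (lam * x) * f x := by
  have hf (a b : ℝ) : IntegrableOn f (Ioo a b) := hset.integrableOn a b
  have hR := ae_restrict_Ioo_abs_le
  have hnonneg (a b : ℝ) : 0 ≤ ∫ x in Ioo a b, x ^ 2 * exp (lam * x) * f x :=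
    setIntegral_nonneg measurableSet_Ioo fun x _ => by
      have := hset.hfnonneg x
      positivity
  rw [← setIntegral_Ioo_add_setIntegral_Ioo (b := 0) (by norm_num) hset.hl.le
    ((hf (-1) ℓ).continuous_mul_of_ae_abs_le (φ := fun x => x ^ 2 * exp (lam * x))
      (by fun_prop) (hR (-1) ℓ))]
  rcases le_total 0 lam with hlam | hlam
  · have hright : ∫ x in Ioo 0 ℓ, x ^ 2 * f x ≤ ∫ x in Ioo 0 ℓ, x ^ 2 * exp (lam * x) * f x :=
      integral_sq_mul_le_integral_sq_mul_exp hset.hfnonneg (hf 0 ℓ) (hR 0 ℓ)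
        (ae_restrict_of_forall_mem measurableSet_Ioo fun x hx => mul_nonneg hlam hx.1.le)
    have : del c ℓ f ≤ c + ∫ x in Ioo 0 ℓ, x ^ 2 * f x := min_le_right _ _
    linarith [hnonneg (-1) 0]
  · have hleft : ∫ x in Ioo (-1) 0, x ^ 2 * f x ≤ ∫ x in Ioo (-1) 0, x ^ 2 * exp (lam * x) * f x :=
      integral_sq_mul_le_integral_sq_mul_exp hset.hfnonneg (hf (-1) 0) (hR (-1) 0)
        (ae_restrict_of_forall_mem measurableSet_Ioo fun x hx =>
          mul_nonneg_of_nonpos_of_nonpos hlam hx.2.le)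
    have : del c ℓ f ≤ c + ∫ x in Ioo (-1) 0, x ^ 2 * f x := min_le_left _ _
    linarith [hnonneg 0 ℓ]

theorem del_pos (hset : ExampleSetting c ℓ f) : 0 < del c ℓ f := by
  have hsq_nonneg (a b : ℝ) : 0 ≤ ∫ x in Ioo a b, x ^ 2 * f x :=
    setIntegral_nonneg measurableSet_Ioo fun x _ => mul_nonneg (sq_nonneg x) (hset.hfnonneg x)
  rcases hset.hc.eq_or_lt with hc | hc
  · obtain ⟨hneg, hpos⟩ := hset.hjumps hc.symm
    simp only [del, del1, del2, ← hc, zero_add, lt_min_iff]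
    exact ⟨integral_sq_mul_pos hset.hfnonneg (hset.integrableOn _ _)
        (ae_restrict_Ioo_abs_le _ _) hneg,
      integral_sq_mul_pos hset.hfnonneg (hset.integrableOn _ _) (ae_restrict_Ioo_abs_le _ _) hpos⟩
  · exact lt_min (by unfold del1; linarith [hsq_nonneg (-1) 0])
      (by unfold del2; linarith [hsq_nonneg 0 ℓ])

end ExampleSetting

/-- **Example, properties of `Φ_e`**: `Φ_e` is differentiable on `ℝ` with
`Φ_e'(λ) = c + ∫₋₁^ℓ x² e^{λx} f(x) dx ≥ δ`, and it has a unique zero `λ_e`,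
which satisfies `|λ_e| ≤ |b₀|/δ` and has the opposite sign to `b₀`. -/
theorem stmt14 (b c ℓ : ℝ) (f : ℝ → ℝ) (hset : ExampleSetting c ℓ f) :
    (∀ lam : ℝ,
      HasDerivAt (PhiE b c ℓ f)
        (c + ∫ x in Set.Ioo (-1 : ℝ) ℓ, x ^ 2 * Real.exp (lam * x) * f x) lam ∧
      del c ℓ f ≤ c + ∫ x in Set.Ioo (-1 : ℝ) ℓ, x ^ 2 * Real.exp (lam * x) * f x) ∧
    ∃ lamE : ℝ, PhiE b c ℓ f lamE = 0 ∧ (∀ lam : ℝ, PhiE b c ℓ f lam = 0 → lam = lamE) ∧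
      |lamE| ≤ |bZero b ℓ f| / del c ℓ f ∧
      (bZero b ℓ f < 0 → 0 < lamE) ∧ (0 < bZero b ℓ f → lamE < 0) ∧
      (bZero b ℓ f = 0 → lamE = 0) := by
  have hderiv := hset.hasDerivAt_PhiE b
  have hδ := hset.del_pos
  have hle := hset.del_le_add_integral_sq_mul_exp
  have hmono : StrictMono (PhiE b c ℓ f) :=
    strictMono_of_hasDerivAt_pos hderiv fun lam => hδ.trans_le (hle lam)
  obtain ⟨lamE, hzero, hbound⟩ := exists_eq_zero_abs_le_of_le_deriv hderiv hδ hle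
  rw [PhiE_zero] at hbound
  refine ⟨fun lam => ⟨hderiv lam, hle lam⟩, lamE, hzero,
    fun lam h => hmono.injective (h.trans hzero.symm), hbound,
    fun h => ?_, fun h => ?_, fun h => ?_⟩
  · rwa [← hmono.lt_iff_lt, hzero, PhiE_zero]
  · rwa [← hmono.lt_iff_lt, hzero, PhiE_zero]
  · exact hmono.injective (by rw [hzero, PhiE_zero, h])
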